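/- arXiv:0910.3723 — 6 statements merged into one kernel-verified Lean document; each statement's English description precedes it below -/
import Mathlib

section
/- Let φ : (0, ∞) → ℝ be differentiable satisfying φ'(σ) + (m/σ − μ)·φ(σ) = κ − 2σ (i.e. λ = −1) with κ > 0. Then φ has at most one zero a with 0 < a < κ/2 and at most one zero b with b > κ/2, where at any zero a in (0, κ/2) one has φ'(a) = κ − 2a > 0 and at any zero b > κ/2 one has φ'(b) = κ − 2b < 0. Consequently φ has at most two zeros in (0, κ/2) ∪ (κ/2, ∞). -/
/-!
Multiplying by the integrating factor `σ ^ m * exp (-μ σ)` turns the equation into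
`(σ ^ m e^{-μσ} φ)' = σ ^ m e^{-μσ} (κ - 2σ)`, so the weighted profile is strictly increasing
on `(0, κ/2)` and strictly decreasing on `(κ/2, ∞)`; since the weight is positive, it vanishes
exactly where `φ` does, hence at most once on each interval.
-/

open Real Set

/-- The integrating factor of the operator `φ ↦ φ' + (c / x - μ) φ` on `x > 0`. -/
noncomputable def integratingFactor (c μ x : ℝ) : ℝ := x ^ c * exp (-μ * x)

section IntegratingFactor

variable {c μ x : ℝ} {φ : ℝ → ℝ} {s : Set ℝ}

lemma integratingFactor_pos (hx : 0 < x) : 0 < integratingFactor c μ x :=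
  mul_pos (rpow_pos_of_pos hx c) (exp_pos _)

lemma hasDerivAt_integratingFactor (hx : 0 < x) :
    HasDerivAt (integratingFactor c μ) ((c / x - μ) * integratingFactor c μ x) x := by
  have hexp : HasDerivAt (fun y => exp (-μ * y)) (exp (-μ * x) * -μ) x := by
    simpa using ((hasDerivAt_id x).const_mul (-μ)).exp
  refine ((hasDerivAt_rpow_const (p := c) (Or.inl hx.ne')).mul hexp).congr_deriv ?_
  rw [integratingFactor, rpow_sub_one hx.ne']
  field_simp
  ring

lemma hasDerivAt_integratingFactor_mul (hx : 0 < x) (hφ : DifferentiableAt ℝ φ x) :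
    HasDerivAt (fun y => integratingFactor c μ y * φ y)
      (integratingFactor c μ x * (deriv φ x + (c / x - μ) * φ x)) x :=
  ((hasDerivAt_integratingFactor hx).mul hφ.hasDerivAt).congr_deriv (by ring)

lemma strictMonoOn_integratingFactor_mul (hs : Convex ℝ s) (hs₀ : s ⊆ Ioi 0)
    (hφ : ∀ x ∈ s, DifferentiableAt ℝ φ x)
    (hpos : ∀ x ∈ s, 0 < deriv φ x + (c / x - μ) * φ x) :
    StrictMonoOn (fun y => integratingFactor c μ y * φ y) s := by
  have hderiv : ∀ x ∈ s, HasDerivAt (fun y => integratingFactor c μ y * φ y)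
      (integratingFactor c μ x * (deriv φ x + (c / x - μ) * φ x)) x :=
    fun x hx => hasDerivAt_integratingFactor_mul (hs₀ hx) (hφ x hx)
  refine strictMonoOn_of_deriv_pos hs
    (fun x hx => (hderiv x hx).continuousAt.continuousWithinAt) fun x hx => ?_
  have hx' := interior_subset hx
  rw [(hderiv x hx').deriv]
  exact mul_pos (integratingFactor_pos (hs₀ hx')) (hpos x hx')

lemma subsingleton_zeros_of_forcing_pos (hs : Convex ℝ s) (hs₀ : s ⊆ Ioi 0)
    (hφ : ∀ x ∈ s, DifferentiableAt ℝ φ x)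
    (hpos : ∀ x ∈ s, 0 < deriv φ x + (c / x - μ) * φ x) :
    {x | x ∈ s ∧ φ x = 0}.Subsingleton := fun a ha b hb =>
  (strictMonoOn_integratingFactor_mul hs hs₀ hφ hpos).injOn ha.1 hb.1 (by simp [ha.2, hb.2])

lemma subsingleton_zeros_of_forcing_neg (hs : Convex ℝ s) (hs₀ : s ⊆ Ioi 0)
    (hφ : ∀ x ∈ s, DifferentiableAt ℝ φ x)
    (hneg : ∀ x ∈ s, deriv φ x + (c / x - μ) * φ x < 0) :
    {x | x ∈ s ∧ φ x = 0}.Subsingleton := by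
  have h := subsingleton_zeros_of_forcing_pos (φ := -φ) (c := c) (μ := μ) hs hs₀
    (fun x hx => (hφ x hx).neg) fun x hx => by
      rw [deriv.neg', Pi.neg_apply]
      linarith [hneg x hx]
  simpa using h

end IntegratingFactor

theorem stmt_2_general (m : ℕ) (κ μ : ℝ) (hκ : 0 < κ) (φ : ℝ → ℝ)
    (hdiff : ∀ σ : ℝ, 0 < σ → DifferentiableAt ℝ φ σ)
    (hode : ∀ σ : ℝ, 0 < σ → deriv φ σ + ((m : ℝ) / σ - μ) * φ σ = κ - 2 * σ) :
    (∀ a ∈ Set.Ioo 0 (κ / 2), φ a = 0 → deriv φ a = κ - 2 * a ∧ 0 < κ - 2 * a) ∧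
    (∀ b ∈ Set.Ioi (κ / 2), φ b = 0 → deriv φ b = κ - 2 * b ∧ κ - 2 * b < 0) ∧
    Set.Subsingleton {a | a ∈ Set.Ioo 0 (κ / 2) ∧ φ a = 0} ∧
    Set.Subsingleton {b | b ∈ Set.Ioi (κ / 2) ∧ φ b = 0} ∧
    Set.encard {σ | σ ∈ Set.Ioo 0 (κ / 2) ∪ Set.Ioi (κ / 2) ∧ φ σ = 0} ≤ 2 := by
  have hright : Ioi (κ / 2) ⊆ Ioi 0 := Ioi_subset_Ioi (by positivity)
  have hzero : ∀ σ, 0 < σ → φ σ = 0 → deriv φ σ = κ - 2 * σ := fun σ hσ h0 => by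
    simpa [h0] using hode σ hσ
  have hs₁ : {a | a ∈ Ioo 0 (κ / 2) ∧ φ a = 0}.Subsingleton :=
    subsingleton_zeros_of_forcing_pos (convex_Ioo _ _) (fun _ hx => hx.1)
      (fun x hx => hdiff x hx.1) fun x hx => by rw [hode x hx.1]; linarith [hx.2]
  have hs₂ : {b | b ∈ Ioi (κ / 2) ∧ φ b = 0}.Subsingleton :=
    subsingleton_zeros_of_forcing_neg (convex_Ioi _) hright
      (fun x hx => hdiff x (hright hx)) fun x hx => by
        rw [hode x (hright hx)]; linarith [mem_Ioi.mp hx]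
  refine ⟨fun a ha h0 => ⟨hzero a ha.1 h0, by linarith [ha.2]⟩,
    fun b hb h0 => ⟨hzero b (hright hb) h0, by linarith [mem_Ioi.mp hb]⟩, hs₁, hs₂, ?_⟩
  have hsplit : {σ | σ ∈ Ioo 0 (κ / 2) ∪ Ioi (κ / 2) ∧ φ σ = 0} =
      {a | a ∈ Ioo 0 (κ / 2) ∧ φ a = 0} ∪ {b | b ∈ Ioi (κ / 2) ∧ φ b = 0} := by
    ext; simp only [mem_union, mem_ofPred_eq, or_and_right]
  calc _ = _ := congrArg encard hsplit
    _ ≤ _ + _ := encard_union_le _ _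
    _ ≤ 1 + 1 := add_le_add (encard_le_one_iff_subsingleton.mpr hs₁)
        (encard_le_one_iff_subsingleton.mpr hs₂)
    _ = 2 := by norm_num

/-- Shrinking case λ = −1: at any zero a ∈ (0, κ/2) one has φ'(a) = κ − 2a > 0, at any
    zero b > κ/2 one has φ'(b) = κ − 2b < 0; there is at most one zero in each region,
    hence at most two zeros in (0, κ/2) ∪ (κ/2, ∞). -/
theorem stmt_2 (m : ℕ) (hm : 1 ≤ m) (κ μ : ℝ) (hκ : 0 < κ) (φ : ℝ → ℝ)
    (hdiff : ∀ σ : ℝ, 0 < σ → DifferentiableAt ℝ φ σ)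
    (hode : ∀ σ : ℝ, 0 < σ → deriv φ σ + ((m : ℝ) / σ - μ) * φ σ = κ - 2 * σ) :
    (∀ a ∈ Set.Ioo 0 (κ / 2), φ a = 0 → deriv φ a = κ - 2 * a ∧ 0 < κ - 2 * a) ∧
    (∀ b ∈ Set.Ioi (κ / 2), φ b = 0 → deriv φ b = κ - 2 * b ∧ κ - 2 * b < 0) ∧
    Set.Subsingleton {a | a ∈ Set.Ioo 0 (κ / 2) ∧ φ a = 0} ∧
    Set.Subsingleton {b | b ∈ Set.Ioi (κ / 2) ∧ φ b = 0} ∧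
    Set.encard {σ | σ ∈ Set.Ioo 0 (κ / 2) ∪ Set.Ioi (κ / 2) ∧ φ σ = 0} ≤ 2 :=
  stmt_2_general m κ μ hκ φ hdiff hode
end

section
/- Let m ≥ 1, κ > 0, μ > 0, and define f(σ, μ) = ((m+1)!/(σ^m μ^{m+2}))·Σ_{j=0}^{m+1} ((2σ − κj/(m+1))·σ^{j−1}/j!)·μ^j. For each fixed σ with 0 < σ < κ/2, there exists a unique μ > 0 with f(σ, μ) = 0, and this root satisfies μ > 2(m+1)/κ. -/
lemma telescope_aux (m : ℕ) (σ x : ℝ) (hσ : σ ≠ 0) (hx : x ≠ 0) (c : ℕ → ℝ)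
    (hc : ∀ j : ℕ, c j = 2 * σ - 2 * j / x) :
    ∑ j ∈ Finset.range (m + 2), (c j * σ ^ ((j:ℤ) - 1) / (Nat.factorial j : ℝ)) * x ^ j
      = 2 * (σ * x) ^ (m+1) / (Nat.factorial (m+1) : ℝ) := by
  set b : ℕ → ℝ := fun j => 2 * (σ * x) ^ j / (Nat.factorial j : ℝ) with hb
  have hstep : ∀ i : ℕ, (c (i+1) * σ ^ (((i+1:ℕ):ℤ) - 1) / (Nat.factorial (i+1) : ℝ)) * x ^ (i+1) = b (i+1) - b i := by
    intro i
    rw [hc, hb]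
    simp only
    have h1 : (((i+1:ℕ):ℤ)) - 1 = (i:ℤ) := by push_cast; ring
    rw [h1, zpow_natCast, Nat.factorial_succ]
    have hfac : ((Nat.factorial i):ℝ) ≠ 0 := by exact_mod_cast (Nat.factorial_pos i).ne'
    have hi1 : ((i:ℝ) + 1) ≠ 0 := by positivity
    push_cast
    field_simp
    ring
  have h0 : (c 0 * σ ^ (((0:ℕ):ℤ) - 1) / (Nat.factorial 0 : ℝ)) * x ^ 0 = b 0 := by
    rw [hc, hb]
    simp [Nat.factorial]
    field_simp
  rw [Finset.sum_range_succ']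
  have hsum : ∑ i ∈ Finset.range (m+1),
      (c (i+1) * σ ^ (((i+1:ℕ):ℤ) - 1) / (Nat.factorial (i+1) : ℝ)) * x ^ (i+1) = b (m+1) - b 0 := by
    rw [← Finset.sum_range_sub b]
    exact Finset.sum_congr rfl fun i _ => hstep i
  rw [hsum, h0, hb]
  simp [Nat.factorial]

/-- For each 0 < σ < κ/2 there is a unique positive root μ of f(σ, μ) = 0, and this
    root satisfies μ > 2(m+1)/κ. -/
theorem stmt_5 (m : ℕ) (hm : 1 ≤ m) (κ : ℝ) (hκ : 0 < κ)
    (f : ℝ → ℝ → ℝ)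
    (hf : ∀ σ μ : ℝ, f σ μ = ((Nat.factorial (m + 1) : ℝ) / (σ ^ m * μ ^ (m + 2))) *
      ∑ j ∈ Finset.range (m + 2),
        ((2 * σ - κ * j / (m + 1)) * σ ^ ((j : ℤ) - 1) / (Nat.factorial j : ℝ)) * μ ^ j)
    (σ : ℝ) (hσ : 0 < σ) (hσκ : σ < κ / 2) :
    (∃! μ : ℝ, 0 < μ ∧ f σ μ = 0) ∧
    (∀ μ : ℝ, 0 < μ → f σ μ = 0 → 2 * (m + 1) / κ < μ) := by
  have hm1 : (0:ℝ) < (m:ℝ) + 1 := by positivity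
  set a : ℕ → ℝ := fun j => (2 * σ - κ * j / (m + 1)) * σ ^ ((j : ℤ) - 1) / (Nat.factorial j : ℝ) with ha
  set P : ℝ → ℝ := fun μ => ∑ j ∈ Finset.range (m + 2), a j * μ ^ j with hP
  -- f vs P
  have hfP : ∀ μ : ℝ, f σ μ = ((Nat.factorial (m+1) : ℝ) / (σ ^ m * μ ^ (m+2))) * P μ := by
    intro μ; rw [hf]
  have key : ∀ μ : ℝ, 0 < μ → (f σ μ = 0 ↔ P μ = 0) := by
    intro μ hμ
    rw [hfP μ, mul_eq_zero]
    have hne : ((Nat.factorial (m+1) : ℝ) / (σ ^ m * μ ^ (m+2))) ≠ 0 := by positivity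
    tauto
  -- sign change index
  set t : ℝ := 2 * σ * ((m:ℝ) + 1) / κ with ht
  have ht0 : 0 ≤ t := by positivity
  set k : ℕ := ⌊t⌋₊ with hk
  have hkt : (k : ℝ) ≤ t := Nat.floor_le ht0
  have htk : t < (k:ℝ) + 1 := Nat.lt_floor_add_one t
  have hkm : k ≤ m := by
    have h1 : t < (m:ℝ) + 1 := by
      rw [ht, div_lt_iff₀ hκ]; nlinarith
    have h2 : k < m + 1 := by
      rw [hk]
      exact Nat.floor_lt ht0 |>.mpr (by push_cast; linarith)
    omega
  have hanonneg : ∀ j : ℕ, j ≤ k → 0 ≤ a j := by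
    intro j hj
    have hj' : (j:ℝ) ≤ t := le_trans (by exact_mod_cast hj) hkt
    have hjκ : (j:ℝ) * κ ≤ 2 * σ * ((m:ℝ)+1) := by
      rw [ht] at hj'; exact (le_div_iff₀ hκ).mp hj'
    have hc : 0 ≤ 2 * σ - κ * j / ((m:ℝ) + 1) := by
      rw [sub_nonneg, div_le_iff₀ hm1]; nlinarith
    rw [ha]
    have := zpow_pos hσ ((j:ℤ) - 1)
    positivity
  have haneg : ∀ j : ℕ, k < j → a j < 0 := by
    intro j hj
    have hj' : t < (j:ℝ) := by
      have : (k:ℝ) + 1 ≤ (j:ℝ) := by exact_mod_cast hj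
      linarith
    have hjκ : 2 * σ * ((m:ℝ)+1) < (j:ℝ) * κ := by
      rw [ht] at hj'; exact (div_lt_iff₀ hκ).mp hj'
    have hc : 2 * σ - κ * j / ((m:ℝ) + 1) < 0 := by
      rw [sub_neg, lt_div_iff₀ hm1]; nlinarith
    rw [ha]
    exact div_neg_of_neg_of_pos (mul_neg_of_neg_of_pos hc (zpow_pos hσ _))
      (by exact_mod_cast Nat.factorial_pos j)
  have ham1 : a (m+1) < 0 := haneg _ (by omega)
  -- strictly antitone auxiliary function
  set Q : ℝ → ℝ := fun μ => ∑ j ∈ Finset.range (m + 2), a j * μ ^ ((j:ℤ) - (k:ℤ)) with hQ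
  have hQanti : ∀ μ1 μ2 : ℝ, 0 < μ1 → μ1 < μ2 → Q μ2 < Q μ1 := by
    intro μ1 μ2 h1 h12
    rw [hQ]
    have hterm : ∀ j ∈ Finset.range (m+2), a j * μ2 ^ ((j:ℤ)-(k:ℤ)) ≤ a j * μ1 ^ ((j:ℤ)-(k:ℤ)) := by
      intro j _
      rcases le_or_gt j k with hjk | hjk
      · have he : ((j:ℤ) - (k:ℤ)) = -((k - j : ℕ) : ℤ) := by
          push_cast [Nat.cast_sub hjk]; ring
        rw [he, zpow_neg, zpow_neg, zpow_natCast, zpow_natCast]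
        refine mul_le_mul_of_nonneg_left ?_ (hanonneg j hjk)
        exact inv_anti₀ (pow_pos h1 _) (pow_le_pow_left₀ h1.le h12.le _)
      · have he : ((j:ℤ) - (k:ℤ)) = ((j - k : ℕ) : ℤ) := by
          push_cast [Nat.cast_sub hjk.le]; ring
        rw [he, zpow_natCast, zpow_natCast]
        exact mul_le_mul_of_nonpos_left
          (pow_le_pow_left₀ h1.le h12.le _) (haneg j hjk).le
    have hstrict : ∃ j ∈ Finset.range (m+2), a j * μ2 ^ ((j:ℤ)-(k:ℤ)) < a j * μ1 ^ ((j:ℤ)-(k:ℤ)) := by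
      refine ⟨m+1, by simp, ?_⟩
      have hjk : k < m + 1 := by omega
      have he : (((m+1:ℕ)):ℤ) - (k:ℤ) = ((m + 1 - k : ℕ) : ℤ) := by
        push_cast [Nat.cast_sub hjk.le]; ring
      rw [he, zpow_natCast, zpow_natCast]
      refine mul_lt_mul_of_neg_left ?_ (haneg _ hjk)
      exact pow_lt_pow_left₀ h12 h1.le (by omega)
    exact Finset.sum_lt_sum hterm hstrict
  have hQP : ∀ μ : ℝ, 0 < μ → Q μ = μ ^ (-(k:ℤ)) * P μ := by
    intro μ hμ
    rw [hQ, hP, Finset.mul_sum]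
    refine Finset.sum_congr rfl fun j _ => ?_
    rw [show ((j:ℤ) - (k:ℤ)) = -(k:ℤ) + (j:ℤ) by ring,
      zpow_add₀ (ne_of_gt hμ), zpow_natCast]
    ring
  -- the special point μs
  set μs : ℝ := 2 * ((m:ℝ) + 1) / κ with hμs
  have hμs0 : 0 < μs := by positivity
  have hPμs : P μs = 2 * (σ * μs) ^ (m+1) / (Nat.factorial (m+1) : ℝ) := by
    rw [hP, ha]
    refine telescope_aux m σ μs (ne_of_gt hσ) (ne_of_gt hμs0) _ fun j => ?_
    have hμsκ : μs * κ = 2 * ((m:ℝ) + 1) := by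
      rw [hμs]; field_simp
    have : κ * (j:ℝ) / ((m:ℝ) + 1) = 2 * (j:ℝ) / μs := by
      rw [div_eq_div_iff (ne_of_gt hm1) (ne_of_gt hμs0)]; nlinarith
    rw [this]
  have hPμspos : 0 < P μs := by
    rw [hPμs]; positivity
  have hQμs : 0 < Q μs := by
    rw [hQP μs hμs0]
    exact mul_pos (zpow_pos hμs0 _) hPμspos
  -- existence of a root
  have hPcont : Continuous P := by
    rw [hP]
    exact continuous_finset_sum _ (fun j _ => by fun_prop)
  obtain ⟨μ0, hμ0μs, hPμ0⟩ : ∃ μ0, μs ≤ μ0 ∧ P μ0 = 0 := by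
    set A : ℝ := ∑ j ∈ Finset.range (m+1), |a j| with hA
    have hA0 : 0 ≤ A := Finset.sum_nonneg fun j _ => abs_nonneg _
    set M : ℝ := max 1 (max μs ((A + 1) / (-a (m+1)))) with hM
    have hM1 : (1:ℝ) ≤ M := le_max_left _ _
    have hM0 : (0:ℝ) < M := by linarith
    have hMμs : μs ≤ M := le_trans (le_max_left _ _) (le_max_right _ _)
    have hMa : (A+1) / (-a (m+1)) ≤ M := le_trans (le_max_right _ _) (le_max_right _ _)
    have hMm : (0:ℝ) < M ^ m := pow_pos hM0 m
    have hPM : P M < 0 := by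
      have hbound : ∑ j ∈ Finset.range (m+1), a j * M ^ j ≤ A * M ^ m := by
        rw [hA, Finset.sum_mul]
        refine Finset.sum_le_sum fun j hj => ?_
        have hj' : j ≤ m := Nat.lt_succ_iff.mp (Finset.mem_range.mp hj)
        calc a j * M ^ j ≤ |a j| * M ^ j :=
              mul_le_mul_of_nonneg_right (le_abs_self _) (pow_nonneg hM0.le _)
          _ ≤ |a j| * M ^ m :=
              mul_le_mul_of_nonneg_left (pow_le_pow_right₀ hM1 hj') (abs_nonneg _)
      have h1 : (A + 1) ≤ (-a (m+1)) * M := by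
        rw [div_le_iff₀ (neg_pos.mpr ham1)] at hMa; linarith [hMa]
      have hlast : a (m+1) * M ^ (m+1) ≤ -(A+1) * M ^ m := by
        calc a (m+1) * M^(m+1) = (a (m+1) * M) * M^m := by ring
          _ ≤ -(A+1) * M^m := mul_le_mul_of_nonneg_right (by linarith) hMm.le
      rw [hP]
      simp only
      rw [Finset.sum_range_succ]
      nlinarith
    obtain ⟨μ0, hμ0mem, hμ0⟩ := intermediate_value_Icc' hMμs hPcont.continuousOn
      (Set.mem_Icc.mpr ⟨hPM.le, hPμspos.le⟩)
    exact ⟨μ0, hμ0mem.1, hμ0⟩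
  have hμ0pos : 0 < μ0 := lt_of_lt_of_le hμs0 hμ0μs
  have hQzero : ∀ μ : ℝ, 0 < μ → f σ μ = 0 → Q μ = 0 := by
    intro μ hμ hfμ
    rw [hQP μ hμ, (key μ hμ).mp hfμ, mul_zero]
  have hgt : ∀ μ : ℝ, 0 < μ → f σ μ = 0 → μs < μ := by
    intro μ hμ hfμ
    have hQμ : Q μ = 0 := hQzero μ hμ hfμ
    by_contra h
    push_neg at h
    rcases eq_or_lt_of_le h with he | hl
    · rw [he] at hQμ; linarith
    · linarith [hQanti μ μs hμ hl]
  have hfμ0 : f σ μ0 = 0 := (key μ0 hμ0pos).mpr hPμ0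
  refine ⟨⟨μ0, ⟨hμ0pos, hfμ0⟩, ?_⟩, hgt⟩
  rintro y ⟨hy0, hfy⟩
  have hQy : Q y = 0 := hQzero y hy0 hfy
  have hQμ0 : Q μ0 = 0 := hQzero μ0 hμ0pos hfμ0
  rcases lt_trichotomy y μ0 with h | h | h
  · linarith [hQanti y μ0 hy0 h]
  · exact h
  · linarith [hQanti μ0 y hμ0pos h]
end

section
/- Let m ≥ 1, κ > 0, μ > 0 and 0 < σ < κ/2. The polynomial p(μ) = Σ_{j=0}^{m+1} c_j μ^j with c_j = (2σ − κj/(m+1))·σ^{j−1}/j! has coefficient sequence with exactly one sign change (c_j > 0 for j < j₀ and c_j < 0 for j ≥ j₀ where j₀ = ⌈2σ(m+1)/κ⌉, possibly with one vanishing coefficient at the transition), and therefore p has at most one positive real root. -/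
private lemma zpow_anti_aux {a b : ℝ} (ha : 0 < a) (hab : a ≤ b) {e : ℤ} (he : e ≤ 0) :
    b ^ e ≤ a ^ e := by
  obtain ⟨k, rfl⟩ : ∃ k : ℕ, e = -(k : ℤ) := ⟨(-e).toNat, by omega⟩
  rw [zpow_neg, zpow_neg, zpow_natCast, zpow_natCast]
  gcongr

private lemma zpow_anti_aux' {a b : ℝ} (ha : 0 < a) (hab : a < b) {e : ℤ} (he : e < 0) :
    b ^ e < a ^ e := by
  obtain ⟨k, hk, rfl⟩ : ∃ k : ℕ, k ≠ 0 ∧ e = -(k : ℤ) := ⟨(-e).toNat, by omega, by omega⟩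
  rw [zpow_neg, zpow_neg, zpow_natCast, zpow_natCast]
  exact inv_strictAnti₀ (pow_pos ha k) (pow_lt_pow_left₀ hab ha.le hk)

/-- The coefficient sequence c_j = (2σ − κj/(m+1))·σ^{j−1}/j! changes sign exactly once,
    at j₀ = ⌈2σ(m+1)/κ⌉ (possibly with a vanishing coefficient at the transition), and
    hence the polynomial Σ c_j μ^j has at most one positive real root. -/
theorem stmt_6 (m : ℕ) (hm : 1 ≤ m) (κ σ : ℝ) (hκ : 0 < κ) (hσ : 0 < σ)
    (hσκ : σ < κ / 2)
    (c : ℕ → ℝ)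
    (hc : ∀ j : ℕ, c j = (2 * σ - κ * j / (m + 1)) * σ ^ ((j : ℤ) - 1) / (Nat.factorial j : ℝ))
    (j₀ : ℤ) (hj₀ : j₀ = ⌈2 * σ * (m + 1) / κ⌉) :
    (∀ j : ℕ, (j : ℤ) < j₀ → 0 < c j) ∧
    (∀ j : ℕ, j₀ ≤ (j : ℤ) → j ≤ m + 1 → c j ≤ 0) ∧
    (∀ j : ℕ, j₀ < (j : ℤ) → j ≤ m + 1 → c j < 0) ∧
    Set.Subsingleton {μ : ℝ | 0 < μ ∧ ∑ j ∈ Finset.range (m + 2), c j * μ ^ j = 0} := by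
  have hm1 : (0 : ℝ) < (m : ℝ) + 1 := by positivity
  set x : ℝ := 2 * σ * (m + 1) / κ with hxdef
  have hx0 : 0 < x := by positivity
  -- sign of the linear factor
  have hAlt : ∀ j : ℕ, (j : ℝ) < x → 0 < 2 * σ - κ * j / (m + 1) := by
    intro j hj
    rw [hxdef, lt_div_iff₀ hκ] at hj
    rw [sub_pos, div_lt_iff₀ hm1]
    nlinarith
  have hAle : ∀ j : ℕ, x ≤ (j : ℝ) → 2 * σ - κ * j / (m + 1) ≤ 0 := by
    intro j hj
    rw [hxdef, div_le_iff₀ hκ] at hj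
    rw [sub_nonpos, le_div_iff₀ hm1]
    nlinarith
  have hAlt' : ∀ j : ℕ, x < (j : ℝ) → 2 * σ - κ * j / (m + 1) < 0 := by
    intro j hj
    rw [hxdef, div_lt_iff₀ hκ] at hj
    rw [sub_neg, lt_div_iff₀ hm1]
    nlinarith
  have hfact : ∀ j : ℕ, (0 : ℝ) < (Nat.factorial j : ℝ) := by
    intro j; exact_mod_cast Nat.factorial_pos j
  have hzp : ∀ j : ℕ, (0 : ℝ) < σ ^ ((j : ℤ) - 1) := fun j => zpow_pos hσ _
  have hpos : ∀ j : ℕ, (j : ℤ) < j₀ → 0 < c j := by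
    intro j hj
    rw [hj₀] at hj
    have hjx : (j : ℝ) < x := by exact_mod_cast Int.lt_ceil.mp hj
    rw [hc]
    exact div_pos (mul_pos (hAlt j hjx) (hzp j)) (hfact j)
  have hnonpos : ∀ j : ℕ, j₀ ≤ (j : ℤ) → c j ≤ 0 := by
    intro j hj
    rw [hj₀] at hj
    have hjx : x ≤ (j : ℝ) := by exact_mod_cast Int.ceil_le.mp hj
    rw [hc]
    exact div_nonpos_of_nonpos_of_nonneg
      (mul_nonpos_of_nonpos_of_nonneg (hAle j hjx) (hzp j).le) (hfact j).le
  have hneg : ∀ j : ℕ, j₀ < (j : ℤ) → c j < 0 := by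
    intro j hj
    rw [hj₀] at hj
    have hjx : x < (j : ℝ) := by
      have h1 : x ≤ (⌈x⌉ : ℝ) := Int.le_ceil x
      have h2 : ((⌈x⌉ : ℤ) : ℝ) < (j : ℝ) := by exact_mod_cast hj
      linarith
    rw [hc]
    exact div_neg_of_neg_of_pos (mul_neg_of_neg_of_pos (hAlt' j hjx) (hzp j)) (hfact j)
  have hj₀pos : 0 < j₀ := by rw [hj₀]; exact Int.ceil_pos.mpr hx0
  refine ⟨hpos, fun j hj _ => hnonpos j hj, fun j hj _ => hneg j hj, ?_⟩
  -- the auxiliary strictly antitone function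
  set g : ℝ → ℝ := fun μ => ∑ j ∈ Finset.range (m + 2), c j * μ ^ ((j : ℤ) - j₀) with hg
  have hanti : ∀ μ₁ μ₂ : ℝ, 0 < μ₁ → μ₁ < μ₂ → g μ₂ < g μ₁ := by
    intro μ₁ μ₂ h1 h12
    apply Finset.sum_lt_sum
    · intro j _
      rcases lt_or_ge (j : ℤ) j₀ with hlt | hge
      · have hcj := (hpos j hlt).le
        have : μ₂ ^ ((j : ℤ) - j₀) ≤ μ₁ ^ ((j : ℤ) - j₀) :=
          zpow_anti_aux h1 h12.le (by omega)
        exact mul_le_mul_of_nonneg_left this hcj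
      · have hcj := hnonpos j hge
        have : μ₁ ^ ((j : ℤ) - j₀) ≤ μ₂ ^ ((j : ℤ) - j₀) := by
          obtain ⟨k, hk⟩ : ∃ k : ℕ, (j : ℤ) - j₀ = (k : ℤ) := ⟨((j : ℤ) - j₀).toNat, by omega⟩
          rw [hk, zpow_natCast, zpow_natCast]
          exact pow_le_pow_left₀ h1.le h12.le k
        exact mul_le_mul_of_nonpos_left this hcj
    · refine ⟨0, Finset.mem_range.mpr (by omega), ?_⟩
      have hc0 : 0 < c 0 := hpos 0 (by exact_mod_cast hj₀pos)
      have : μ₂ ^ ((0 : ℤ) - j₀) < μ₁ ^ ((0 : ℤ) - j₀) :=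
        zpow_anti_aux' h1 h12 (by omega)
      exact mul_lt_mul_of_pos_left this hc0
  -- relate g to the polynomial
  have hgp : ∀ μ : ℝ, 0 < μ →
      g μ = (∑ j ∈ Finset.range (m + 2), c j * μ ^ j) * μ ^ (-j₀) := by
    intro μ hμ
    rw [hg, Finset.sum_mul]
    refine Finset.sum_congr rfl fun j _ => ?_
    rw [mul_assoc, ← zpow_natCast μ j, ← zpow_add₀ hμ.ne', sub_eq_add_neg]
  intro μ₁ hμ₁ μ₂ hμ₂
  obtain ⟨h1p, h1r⟩ := hμ₁
  obtain ⟨h2p, h2r⟩ := hμ₂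
  have hg1 : g μ₁ = 0 := by rw [hgp μ₁ h1p, h1r, zero_mul]
  have hg2 : g μ₂ = 0 := by rw [hgp μ₂ h2p, h2r, zero_mul]
  by_contra hne
  rcases lt_or_gt_of_ne hne with h | h
  · exact absurd (hg2 ▸ hg1 ▸ hanti μ₁ μ₂ h1p h) (lt_irrefl 0)
  · exact absurd (hg1 ▸ hg2 ▸ hanti μ₂ μ₁ h2p h) (lt_irrefl 0)
end

section
/- Let φ be real-analytic near 0 with φ(0) = 0 and φ'(0) = a₁ > 0, let r = e^{s} and let τ(s) solve dτ/ds = φ(τ) with τ → 0 as s → −∞. If the limit L = lim_{s→−∞} φ(τ(s))/r² exists in (0, ∞), then a₁ = 2. Conversely if a₁ = 2 then the limit lim_{s→−∞} φ(τ(s))/e^{2s} exists and is positive. -/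
/-!
Along the trajectory, `u = φ ∘ τ = τ'` satisfies `u' = φ'(τ) u`, so `log u - a₁ s` has derivative
`φ'(τ) - a₁ = O(τ) = O(u)`. As `u = τ'` is positive and `τ` converges at `-∞`, `u` is integrable
on a half-line `(-∞, s₀]`; hence `log u - a₁ s` converges, i.e. `u / e^{a₁ s} → C > 0`. Comparing
two such limits with different exponents forces the exponents to agree.
-/

open Filter Real Set MeasureTheory Topology

theorem integrableOn_Iic_deriv_of_nonneg {g g' : ℝ → ℝ} {a l : ℝ}
    (hderiv : ∀ x ∈ Iic a, HasDerivAt g (g' x) x) (g'pos : ∀ x ∈ Iio a, 0 ≤ g' x)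
    (hg : Tendsto g atBot (𝓝 l)) : IntegrableOn g' (Iic a) := by
  have hneg : IntegrableOn (fun x => -g' (-x)) (Ioi (-a)) :=
    integrableOn_Ioi_deriv_of_nonpos' (g := fun x => g (-x))
      (fun x hx => by
        have := (hderiv (-x) (neg_le.1 hx : -x ≤ a)).comp x (hasDerivAt_neg x)
        rwa [mul_neg_one] at this)
      (fun x hx => neg_nonpos.2 (g'pos (-x) (neg_lt.1 hx : -x < a)))
      (hg.comp tendsto_neg_atTop_atBot)
  simpa using ((integrableOn_Ici_iff_integrableOn_Ioi).2 hneg).neg.comp_neg_Iic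

theorem exists_tendsto_atBot_of_abs_deriv_le {F F' g : ℝ → ℝ} {a : ℝ}
    (hF : ∀ s ∈ Iic a, HasDerivAt F (F' s) s) (hg : IntegrableOn g (Iic a))
    (hbound : ∀ s ∈ Iic a, |F' s| ≤ g s) : ∃ l, Tendsto F atBot (𝓝 l) := by
  have hderiv : ∀ s ∈ Iic a, deriv F s = F' s := fun s hs => (hF s hs).deriv
  have hint : IntegrableOn (deriv F) (Iic a) :=
    hg.mono' (measurable_deriv F).aestronglyMeasurable
      (ae_restrict_of_forall_mem measurableSet_Iic fun s hs => by
        simpa [hderiv s hs] using hbound s hs)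
  exact ⟨_, tendsto_limUnder_of_hasDerivAt_of_integrableOn_Iic
    (fun s hs => hderiv s hs ▸ hF s hs) hint⟩

theorem exists_pos_tendsto_div_exp_of_hasDerivAt {φ τ : ℝ → ℝ} {a K l s₀ : ℝ}
    (hode : ∀ s ∈ Iic s₀, HasDerivAt τ (φ (τ s)) s) (hτ : Tendsto τ atBot (𝓝 l))
    (hφ : ∀ s ∈ Iic s₀, DifferentiableAt ℝ φ (τ s)) (hpos : ∀ s ∈ Iic s₀, 0 < φ (τ s))
    (hderiv : ∀ s ∈ Iic s₀, |deriv φ (τ s) - a| ≤ K * φ (τ s)) :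
    ∃ C > 0, Tendsto (fun s => φ (τ s) / exp (a * s)) atBot (𝓝 C) := by
  have hF : ∀ s ∈ Iic s₀,
      HasDerivAt (fun u => log (φ (τ u)) - a * u) (deriv φ (τ s) - a) s := by
    intro s hs
    have := (((hφ s hs).hasDerivAt.comp s (hode s hs)).log (hpos s hs).ne').sub
      ((hasDerivAt_id s).const_mul a)
    rwa [Function.comp_apply, mul_div_cancel_right₀ _ (hpos s hs).ne', mul_one] at this
  have hint : IntegrableOn (fun s => K * φ (τ s)) (Iic s₀) :=
    (integrableOn_Iic_deriv_of_nonneg hode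
      (fun s hs => (hpos s (Iio_subset_Iic_self hs)).le) hτ).const_mul K
  obtain ⟨L, hL⟩ := exists_tendsto_atBot_of_abs_deriv_le hF hint hderiv
  refine ⟨exp L, exp_pos L, ((continuous_exp.tendsto L).comp hL).congr' ?_⟩
  filter_upwards [eventually_le_atBot s₀] with s hs
  simp [exp_sub, exp_log (hpos s hs)]

theorem AnalyticAt.exists_abs_deriv_sub_le_mul {φ : ℝ → ℝ} (hφ : AnalyticAt ℝ φ 0)
    (hφ0 : φ 0 = 0) (ha : 0 < deriv φ 0) :
    ∃ K : ℝ, ∀ᶠ x in 𝓝[>] 0,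
      DifferentiableAt ℝ φ x ∧ 0 < φ x ∧ |deriv φ x - deriv φ 0| ≤ K * φ x := by
  set a := deriv φ 0
  obtain ⟨K, t, ht, hK⟩ := (hφ.deriv.contDiffAt (n := 1)).exists_lipschitzOnWith
  have hlin : ∀ᶠ x in 𝓝 0, |φ x - a * x| ≤ a / 2 * |x| := by
    simpa [hφ0, Real.norm_eq_abs, mul_comm] using
      hφ.differentiableAt.hasDerivAt.isLittleO.def (half_pos ha)
  refine ⟨2 * K / a, ?_⟩
  filter_upwards [self_mem_nhdsWithin, nhdsWithin_le_nhds ht, nhdsWithin_le_nhds hlin,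
    nhdsWithin_le_nhds hφ.eventually_analyticAt] with x (hx : 0 < x) hxt hxlin hxφ
  have hlow : a / 2 * x ≤ φ x := by
    rw [abs_of_pos hx] at hxlin
    linarith [(abs_le.1 hxlin).1]
  have hlip : |deriv φ x - a| ≤ K * x := by
    simpa [Real.dist_eq, abs_of_pos hx] using hK.dist_le_mul x hxt 0 (mem_of_mem_nhds ht)
  refine ⟨hxφ.differentiableAt, by nlinarith, hlip.trans ?_⟩
  calc (K : ℝ) * x = 2 * K / a * (a / 2 * x) := by field_simp
    _ ≤ 2 * K / a * φ x := by gcongr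

theorem eq_of_tendsto_div_exp_mul {f : ℝ → ℝ} {a b C L : ℝ} (hC : 0 < C) (hL : 0 < L)
    (ha : Tendsto (fun s => f s / exp (a * s)) atBot (𝓝 C))
    (hb : Tendsto (fun s => f s / exp (b * s)) atBot (𝓝 L)) : a = b := by
  have hlinear : Tendsto (fun s => (a - b) * s) atBot (𝓝 (log (L / C))) := by
    refine ((hb.div ha hC.ne').log (div_pos hL hC).ne').congr' ?_
    filter_upwards [ha.eventually (eventually_gt_nhds hC)] with s hs
    have hf : f s ≠ 0 := by
      rintro h
      simp [h] at hs
    simp only [Pi.div_apply]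
    rw [div_div_div_cancel_left' _ _ hf, div_eq_mul_inv, ← exp_neg, ← exp_add, log_exp]
    ring
  by_contra hab
  rcases lt_or_gt_of_ne (sub_ne_zero.2 hab) with h | h
  · exact not_tendsto_nhds_of_tendsto_atTop
      ((tendsto_const_mul_atTop_of_neg h).2 tendsto_id) _ hlinear
  · exact not_tendsto_nhds_of_tendsto_atBot
      ((tendsto_const_mul_atBot_of_pos h).2 tendsto_id) _ hlinear

theorem stmt_11_general (φ : ℝ → ℝ) (a₁ δ s₁ : ℝ) (ha₁ : 0 < a₁)
    (hφ : AnalyticAt ℝ φ 0) (hφ0 : φ 0 = 0) (hφ' : deriv φ 0 = a₁)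
    (τ : ℝ → ℝ) (hτmem : ∀ s < s₁, τ s ∈ Set.Ioo 0 δ)
    (hode : ∀ s < s₁, HasDerivAt τ (φ (τ s)) s)
    (hlim : Filter.Tendsto τ Filter.atBot (nhds 0)) :
    ((∃ L : ℝ, 0 < L ∧
        Filter.Tendsto (fun s => φ (τ s) / Real.exp s ^ 2) Filter.atBot (nhds L)) →
      a₁ = 2) ∧
    (a₁ = 2 → ∃ L : ℝ, 0 < L ∧
      Filter.Tendsto (fun s => φ (τ s) / Real.exp (2 * s)) Filter.atBot (nhds L)) := by
  obtain ⟨K, hK⟩ := hφ.exists_abs_deriv_sub_le_mul hφ0 (hφ' ▸ ha₁)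
  rw [hφ'] at hK
  have hτ : Tendsto τ atBot (𝓝[>] 0) := tendsto_nhdsWithin_iff.2
    ⟨hlim, (eventually_lt_atBot s₁).mono fun s hs => (hτmem s hs).1⟩
  obtain ⟨s₀, hs₀⟩ := eventually_atBot.1 ((hτ.eventually hK).and (eventually_lt_atBot s₁))
  obtain ⟨C, hC, hCt⟩ := exists_pos_tendsto_div_exp_of_hasDerivAt
    (fun s hs => hode s (hs₀ s hs).2) hlim (fun s hs => (hs₀ s hs).1.1)
    (fun s hs => (hs₀ s hs).1.2.1) (fun s hs => (hs₀ s hs).1.2.2)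
  refine ⟨fun ⟨L, hL, hLt⟩ => eq_of_tendsto_div_exp_mul hC hL hCt ?_, ?_⟩
  · simpa [← exp_nat_mul] using hLt
  · rintro rfl
    exact ⟨C, hC, hCt⟩

/-- Smooth extension criterion: with r = e^s, the limit lim_{s→−∞} φ(τ(s))/r² exists
    and is positive iff a₁ = φ'(0) equals 2. -/
theorem stmt_11 (φ : ℝ → ℝ) (a₁ δ s₁ : ℝ) (ha₁ : 0 < a₁) (hδ : 0 < δ)
    (hφ : AnalyticAt ℝ φ 0) (hφ0 : φ 0 = 0) (hφ' : deriv φ 0 = a₁)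
    (τ : ℝ → ℝ) (hτmem : ∀ s < s₁, τ s ∈ Set.Ioo 0 δ)
    (hode : ∀ s < s₁, HasDerivAt τ (φ (τ s)) s)
    (hlim : Filter.Tendsto τ Filter.atBot (nhds 0)) :
    ((∃ L : ℝ, 0 < L ∧
        Filter.Tendsto (fun s => φ (τ s) / Real.exp s ^ 2) Filter.atBot (nhds L)) →
      a₁ = 2) ∧
    (a₁ = 2 → ∃ L : ℝ, 0 < L ∧
      Filter.Tendsto (fun s => φ (τ s) / Real.exp (2 * s)) Filter.atBot (nhds L)) :=
  stmt_11_general φ a₁ δ s₁ ha₁ hφ hφ0 hφ' τ hτmem hode hlim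
end

section
/- Let m ≥ 1, μ ≠ 0, c < 0, and c₁ = −κ + c/(m+1). Suppose φ : [1, ∞) → ℝ is differentiable, φ(1) = 0, and (σ^m φ)'(σ) − μ σ^m φ(σ) = σ^m(κ − (c/(m+1))σ) − κ + c/(m+1) for all σ ≥ 1, with μ < 0. Then φ(σ) > 0 for all σ > 1. -/
/-!
Put `y σ = σ^m φ σ`. The equation says `y' − μ y` equals the right-hand side, which is positive
for `σ > 1` because it splits as `(κ − c/(m+1))(σ^m − 1) − (c/(m+1)) σ^m (σ − 1)`. Multiplying by
the integrating factor `exp(−μσ)` makes `exp(−μσ) y` strictly increasing, and it vanishes at `1`.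
-/

open Set

theorem pos_of_mul_lt_deriv {y : ℝ → ℝ} {a μ : ℝ} (hcont : ContinuousOn y (Ici a))
    (hdiff : ∀ x ∈ Ioi a, DifferentiableAt ℝ y x) (ha : y a = 0)
    (hineq : ∀ x ∈ Ioi a, μ * y x < deriv y x) :
    ∀ x ∈ Ioi a, 0 < y x := by
  set g : ℝ → ℝ := fun x => Real.exp (-μ * x) * y x
  have hexp (x : ℝ) : HasDerivAt (fun x => Real.exp (-μ * x)) (Real.exp (-μ * x) * -μ) x := by
    simpa using ((hasDerivAt_id x).const_mul (-μ)).exp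
  have hg_cont : ContinuousOn g (Ici a) :=
    (Real.continuous_exp.comp (continuous_const.mul continuous_id)).continuousOn.mul hcont
  have hg_deriv : ∀ x ∈ interior (Ici a), 0 < deriv g x := by
    rw [interior_Ici]
    intro x hx
    have hg : HasDerivAt g (Real.exp (-μ * x) * -μ * y x + Real.exp (-μ * x) * deriv y x) x :=
      (hexp x).mul (hdiff x hx).hasDerivAt
    rw [hg.deriv, show Real.exp (-μ * x) * -μ * y x + Real.exp (-μ * x) * deriv y x
        = Real.exp (-μ * x) * (deriv y x - μ * y x) by ring]
    exact mul_pos (Real.exp_pos _) (sub_pos.mpr (hineq x hx))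
  have hmono : StrictMonoOn g (Ici a) := strictMonoOn_of_deriv_pos (convex_Ici a) hg_cont hg_deriv
  intro x hx
  have hgx : 0 < g x := by
    simpa [g, ha] using hmono self_mem_Ici (mem_Ici.mpr (le_of_lt hx)) hx
  exact pos_of_mul_pos_right hgx (Real.exp_pos _).le

theorem soliton_forcing_pos (n : ℕ) {κ d σ : ℝ} (hd : d < 0) (hκd : 0 ≤ κ - d) (hσ : 1 < σ) :
    0 < σ ^ n * (κ - d * σ) - κ + d := by
  have hσn : 1 ≤ σ ^ n := one_le_pow₀ hσ.le
  have hsplit : σ ^ n * (κ - d * σ) - κ + d = (κ - d) * (σ ^ n - 1) + -d * (σ ^ n * (σ - 1)) := by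
    ring
  rw [hsplit]
  exact add_pos_of_nonneg_of_pos (mul_nonneg hκd (by linarith))
    (mul_pos (neg_pos.mpr hd) (mul_pos (by linarith) (by linarith)))

theorem stmt_13_general (m : ℕ) (κ c μ : ℝ) (hc : c < 0)
    (hκc : 0 ≤ κ - c / (m + 1))
    (φ : ℝ → ℝ)
    (hdiff : ∀ σ ∈ Set.Ici (1:ℝ), DifferentiableAt ℝ φ σ)
    (hφ1 : φ 1 = 0)
    (hode : ∀ σ ∈ Set.Ici (1:ℝ),
      deriv (fun x => x ^ m * φ x) σ - μ * σ ^ m * φ σ =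
        σ ^ m * (κ - (c / (m + 1)) * σ) - κ + c / (m + 1)) :
    ∀ σ : ℝ, 1 < σ → 0 < φ σ := by
  have hd : c / (m + 1) < 0 := div_neg_of_neg_of_pos hc (by positivity)
  have hy_diff : ∀ σ ∈ Ici (1:ℝ), DifferentiableAt ℝ (fun x => x ^ m * φ x) σ :=
    fun σ hσ => (differentiableAt_pow m).mul (hdiff σ hσ)
  have hineq : ∀ σ ∈ Ioi (1:ℝ), μ * (σ ^ m * φ σ) < deriv (fun x => x ^ m * φ x) σ := by
    intro σ hσ
    have hode_σ := hode σ (mem_Ici.mpr (le_of_lt hσ))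
    have hforcing := soliton_forcing_pos m hd hκc hσ
    linarith
  have hy_pos := pos_of_mul_lt_deriv
    (fun σ hσ => (hy_diff σ hσ).continuousAt.continuousWithinAt)
    (fun σ hσ => hy_diff σ (mem_Ici.mpr (le_of_lt hσ))) (by simp [hφ1]) hineq
  intro σ hσ
  exact pos_of_mul_pos_right (hy_pos σ hσ) (pow_pos (zero_lt_one.trans hσ) m).le

/-- Positivity of the gradient scalar soliton profile: if φ(1) = 0 and
    (σ^m φ)' − μσ^m φ = σ^m(κ − (c/(m+1))σ) − κ + c/(m+1) with c < 0, μ < 0 and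
    κ − c/(m+1) ≥ 0, then φ > 0 on (1, ∞). -/
theorem stmt_13 (m : ℕ) (hm : 1 ≤ m) (κ c μ : ℝ) (hc : c < 0) (hμ : μ < 0)
    (hκc : 0 ≤ κ - c / (m + 1))
    (φ : ℝ → ℝ)
    (hdiff : ∀ σ ∈ Set.Ici (1:ℝ), DifferentiableAt ℝ φ σ)
    (hφ1 : φ 1 = 0)
    (hode : ∀ σ ∈ Set.Ici (1:ℝ),
      deriv (fun x => x ^ m * φ x) σ - μ * σ ^ m * φ σ =
        σ ^ m * (κ - (c / (m + 1)) * σ) - κ + c / (m + 1)) :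
    ∀ σ : ℝ, 1 < σ → 0 < φ σ :=
  stmt_13_general m κ c μ hc hκc φ hdiff hφ1 hode
end

section
/- Let m ≥ 1, κ > 0, 0 < a = κ/2 − 1 (so κ > 2), μ > 0 with μ > 2(m+1)/κ satisfying Σ_{j=0}^{m+1} ((2a − κj/(m+1))·a^{j−1}/j!)·μ^j = 0, and define φ(σ) = (2σ/μ) − ((−2 + κμ/(m+1))/μ^{m+2})·Σ_{j=0}^{m} ((m+1)!/j!)·μ^j·σ^{j−m} (the ν = 0, λ = −1 solution). Then φ'(a) = κ − 2a = 2. -/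
/-!
Write `E_n(y) = ∑_{j<n} y^j/j!` and `β = κμ/(m+1) - 2`. The profile is
`φ(σ) = 2σ/μ - β (m+1)!/μ^(m+2) · σ^(-m) E_{m+1}(μσ)`, and since `E_{m+1}' = E_{m+1} - y^m/m!`
it solves the linear ODE `φ' + (m/σ - μ) φ = κ - 2σ` on `σ ≠ 0`. Multiplied by `a`, the polynomial
equation for `μ` reads `β E_{m+1}(aμ) = 2 (aμ)^(m+1)/(m+1)!`, which is exactly `φ(a) = 0`.
Evaluating the ODE at `σ = a` then gives `φ'(a) = κ - 2a`.
-/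

open Finset Filter Topology

noncomputable def expPartialSum (n : ℕ) (y : ℝ) : ℝ :=
  ∑ j ∈ range n, y ^ j / (j.factorial : ℝ)

lemma expPartialSum_succ (n : ℕ) (y : ℝ) :
    expPartialSum (n + 1) y = expPartialSum n y + y ^ n / (n.factorial : ℝ) :=
  sum_range_succ _ _

lemma hasDerivAt_expPartialSum_succ (n : ℕ) (y : ℝ) :
    HasDerivAt (expPartialSum (n + 1)) (expPartialSum n y) y := by
  induction n with
  | zero =>
    have hone : expPartialSum 1 = fun _ => 1 := by funext z; simp [expPartialSum]
    simpa [hone, expPartialSum] using hasDerivAt_const y (1 : ℝ)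
  | succ n ih =>
    have hmonomial : HasDerivAt (fun z => z ^ (n + 1) / ((n + 1).factorial : ℝ))
        (y ^ n / (n.factorial : ℝ)) y := by
      refine ((hasDerivAt_pow (n + 1) y).div_const _).congr_deriv ?_
      push_cast [Nat.factorial_succ]
      field_simp
    have hsplit : expPartialSum (n + 2) =
        expPartialSum (n + 1) + fun z => z ^ (n + 1) / ((n + 1).factorial : ℝ) :=
      funext fun z => expPartialSum_succ _ _
    rw [hsplit, expPartialSum_succ n y]
    exact ih.add hmonomial

lemma sum_range_succ_natCast_mul_pow_div_factorial (k : ℕ) (y : ℝ) :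
    ∑ j ∈ range (k + 1), (j : ℝ) * y ^ j / (j.factorial : ℝ) = y * expPartialSum k y := by
  rw [sum_range_succ', expPartialSum, mul_sum]
  simp only [Nat.cast_zero, zero_mul, zero_div, add_zero]
  refine sum_congr rfl fun j _ => ?_
  push_cast [Nat.factorial_succ]
  field_simp
  ring

lemma hasDerivAt_zpow_neg_mul_expPartialSum (m : ℕ) (μ : ℝ) {σ : ℝ} (hσ : σ ≠ 0) :
    HasDerivAt (fun s => s ^ (-(m : ℤ)) * expPartialSum (m + 1) (μ * s))
      (-(m / σ - μ) * (σ ^ (-(m : ℤ)) * expPartialSum (m + 1) (μ * σ))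
        - μ ^ (m + 1) / (m.factorial : ℝ)) σ := by
  have hE := (hasDerivAt_expPartialSum_succ m (μ * σ)).comp σ
    ((hasDerivAt_id σ).const_mul μ)
  refine ((hasDerivAt_zpow (-(m : ℤ)) σ (Or.inl hσ)).mul hE).congr_deriv ?_
  have hinv : σ ^ (-(m : ℤ)) * σ ^ m = 1 := by
    rw [zpow_neg, zpow_natCast, inv_mul_cancel₀ (pow_ne_zero _ hσ)]
  rw [Function.comp_apply, zpow_sub_one₀ hσ]
  push_cast
  linear_combination -(σ ^ (-(m : ℤ)) * μ) * expPartialSum_succ m (μ * σ)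
    - μ ^ (m + 1) / (m.factorial : ℝ) * hinv

noncomputable def shrinkerProfile (m : ℕ) (κ μ σ : ℝ) : ℝ :=
  2 * σ / μ - (-2 + κ * μ / (m + 1)) / μ ^ (m + 2) * ((m + 1).factorial : ℝ) *
    (σ ^ (-(m : ℤ)) * expPartialSum (m + 1) (μ * σ))

lemma hasDerivAt_shrinkerProfile (m : ℕ) (κ : ℝ) {μ σ : ℝ} (hμ : μ ≠ 0) (hσ : σ ≠ 0) :
    HasDerivAt (shrinkerProfile m κ μ)
      (κ - 2 * σ - (m / σ - μ) * shrinkerProfile m κ μ σ) σ := by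
  have hlinear : HasDerivAt (fun s => 2 * s / μ) (2 / μ) σ := by
    simpa using ((hasDerivAt_id σ).const_mul 2).div_const μ
  refine (hlinear.sub
    ((hasDerivAt_zpow_neg_mul_expPartialSum m μ hσ).const_mul _)).congr_deriv ?_
  rw [shrinkerProfile]
  push_cast [Nat.factorial_succ]
  field_simp
  ring

lemma sum_factorial_div_mul_pow_mul_zpow (m : ℕ) (μ : ℝ) {σ : ℝ} (hσ : σ ≠ 0) :
    ∑ j ∈ range (m + 1),
        ((m + 1).factorial / j.factorial : ℝ) * μ ^ j * σ ^ ((j : ℤ) - m)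
      = (m + 1).factorial * (σ ^ (-(m : ℤ)) * expPartialSum (m + 1) (μ * σ)) := by
  rw [expPartialSum, mul_sum, mul_sum]
  refine sum_congr rfl fun j _ => ?_
  rw [sub_eq_add_neg, zpow_add₀ hσ, zpow_natCast, mul_pow]
  ring

lemma mul_expPartialSum_eq_of_root {m : ℕ} {κ μ a : ℝ} (ha : a ≠ 0)
    (hroot : ∑ j ∈ range (m + 2),
        ((2 * a - κ * j / (m + 1)) * a ^ ((j : ℤ) - 1) / (j.factorial : ℝ)) * μ ^ j = 0) :
    (-2 + κ * μ / (m + 1)) * expPartialSum (m + 1) (a * μ)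
      = 2 * (a * μ) ^ (m + 1) / ((m + 1).factorial : ℝ) := by
  have hscaled : 2 * a * expPartialSum (m + 2) (a * μ)
      - κ / (m + 1) * ∑ j ∈ range (m + 2), (j : ℝ) * (a * μ) ^ j / (j.factorial : ℝ) = 0 := by
    rw [← mul_zero a, ← hroot, expPartialSum, mul_sum, mul_sum, mul_sum, ← sum_sub_distrib]
    refine sum_congr rfl fun j _ => ?_
    rw [zpow_sub_one₀ ha, zpow_natCast, mul_pow]
    field_simp
  rw [sum_range_succ_natCast_mul_pow_div_factorial, expPartialSum_succ] at hscaled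
  field_simp at hscaled ⊢
  apply mul_left_cancel₀ ha
  linear_combination -hscaled

lemma shrinkerProfile_eq_zero_of_root {m : ℕ} {κ μ a : ℝ} (ha : a ≠ 0) (hμ : μ ≠ 0)
    (hroot : ∑ j ∈ range (m + 2),
        ((2 * a - κ * j / (m + 1)) * a ^ ((j : ℤ) - 1) / (j.factorial : ℝ)) * μ ^ j = 0) :
    shrinkerProfile m κ μ a = 0 := by
  have hkey := mul_expPartialSum_eq_of_root ha hroot
  rw [shrinkerProfile, mul_comm μ a]
  calc 2 * a / μ - (-2 + κ * μ / (m + 1)) / μ ^ (m + 2) * ((m + 1).factorial : ℝ) *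
        (a ^ (-(m : ℤ)) * expPartialSum (m + 1) (a * μ))
      = 2 * a / μ - ((m + 1).factorial : ℝ) / μ ^ (m + 2) * a ^ (-(m : ℤ)) *
          ((-2 + κ * μ / (m + 1)) * expPartialSum (m + 1) (a * μ)) := by ring
    _ = 0 := by
      rw [hkey, zpow_neg, zpow_natCast]
      field_simp
      ring

theorem stmt_18_general (m : ℕ) (κ μ a : ℝ) (hκ : 2 < κ)
    (ha : a = κ / 2 - 1) (hμ : 2 * (m + 1) / κ < μ)
    (hroot : ∑ j ∈ Finset.range (m + 2),
        ((2 * a - κ * j / (m + 1)) * a ^ ((j : ℤ) - 1) / (Nat.factorial j : ℝ)) * μ ^ j = 0)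
    (φ : ℝ → ℝ)
    (hφ : ∀ σ : ℝ, 0 < σ → φ σ = 2 * σ / μ -
      ((-2 + κ * μ / (m + 1)) / μ ^ (m + 2)) *
        ∑ j ∈ Finset.range (m + 1),
          ((Nat.factorial (m + 1) : ℝ) / (Nat.factorial j : ℝ)) * μ ^ j * σ ^ ((j : ℤ) - m)) :
    deriv φ a = κ - 2 * a ∧ κ - 2 * a = 2 := by
  have ha0 : 0 < a := by rw [ha]; linarith
  have hμ0 : 0 < μ := lt_trans (div_pos (by positivity) (by linarith)) hμ
  have hφ_eq : φ =ᶠ[𝓝 a] shrinkerProfile m κ μ := by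
    filter_upwards [Ioi_mem_nhds ha0] with σ hσ
    rw [hφ σ hσ, sum_factorial_div_mul_pow_mul_zpow m μ hσ.ne', shrinkerProfile, mul_assoc]
  refine ⟨?_, by rw [ha]; ring⟩
  rw [hφ_eq.deriv_eq, (hasDerivAt_shrinkerProfile m κ hμ0.ne' ha0.ne').deriv,
    shrinkerProfile_eq_zero_of_root ha0.ne' hμ0.ne' hroot, mul_zero, sub_zero]

/-- Derivative condition at the zero of the shrinking-soliton profile: with a = κ/2 − 1,
    μ > 2(m+1)/κ a root of the polynomial equation (so φ(a) = 0), the ν = 0, λ = −1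
    profile satisfies φ'(a) = κ − 2a = 2. -/
theorem stmt_18 (m : ℕ) (hm : 1 ≤ m) (κ μ a : ℝ) (hκ : 2 < κ)
    (ha : a = κ / 2 - 1) (hμ : 2 * (m + 1) / κ < μ)
    (hroot : ∑ j ∈ Finset.range (m + 2),
        ((2 * a - κ * j / (m + 1)) * a ^ ((j : ℤ) - 1) / (Nat.factorial j : ℝ)) * μ ^ j = 0)
    (φ : ℝ → ℝ)
    (hφ : ∀ σ : ℝ, 0 < σ → φ σ = 2 * σ / μ -
      ((-2 + κ * μ / (m + 1)) / μ ^ (m + 2)) *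
        ∑ j ∈ Finset.range (m + 1),
          ((Nat.factorial (m + 1) : ℝ) / (Nat.factorial j : ℝ)) * μ ^ j * σ ^ ((j : ℤ) - m)) :
    deriv φ a = κ - 2 * a ∧ κ - 2 * a = 2 :=
  stmt_18_general m κ μ a hκ ha hμ hroot φ hφ
end
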